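/- Two partial automorphisms α, β of the path P_n are J-related in PAut(P_n) if and only if the multiset of sizes of the maximal intervals of Im α equals the multiset of sizes of the maximal intervals of Im β. -/

import Mathlib

open scoped Classical

/-- `adj u v` means `|u - v| = 1`, i.e. `u` and `v` are adjacent in the path. -/
def adj (u v : ℕ) : Prop := u + 1 = v ∨ v + 1 = u

/-- `f` is an injective partial endomorphism of the path `P_n` on `{1,…,n}`. -/
structure IsIEnd (n : ℕ) (f : ℕ →. ℕ) : Prop where
  dom_subset : f.Dom ⊆ Set.Icc 1 n
  ran_subset : f.ran ⊆ Set.Icc 1 n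
  inj : ∀ ⦃x y a : ℕ⦄, a ∈ f x → a ∈ f y → x = y
  edge : ∀ ⦃u v a b : ℕ⦄, a ∈ f u → b ∈ f v → adj u v → adj a b

/-- `f` is a partial automorphism of the path `P_n`. -/
def IsPAut (n : ℕ) (f : ℕ →. ℕ) : Prop :=
  IsIEnd n f ∧ ∀ ⦃u v a b : ℕ⦄, a ∈ f u → b ∈ f v → adj a b → adj u v

/-- Left-to-right composition of partial maps: `x (pcomp f g) = (x f) g`. -/
def pcomp (f g : ℕ →. ℕ) : ℕ →. ℕ := PFun.comp g f

/-- The inverse of an injective partial map. -/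
noncomputable def pinv (f : ℕ →. ℕ) : ℕ →. ℕ :=
  fun y => ⟨∃ x, y ∈ f x, fun h => h.choose⟩

/-- `I` is an interval of `X`: a set of consecutive integers contained in `X`. -/
def IsIntervalOf (I X : Set ℕ) : Prop :=
  I ⊆ X ∧ ∀ ⦃x⦄, x ∈ I → ∀ ⦃y⦄, y ∈ I → ∀ ⦃z : ℕ⦄, x < z → z < y → z ∈ I

/-- `I` is a maximal interval of `X`. -/
def IsMaxIntervalOf (I X : Set ℕ) : Prop :=
  IsIntervalOf I X ∧ ∀ J, IsIntervalOf J X → I ⊆ J → I = J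

/-! A partial automorphism of the path is, on each interval of its domain, a translation or a
reflection. So if `α = γ β γ'`, then `γ'⁻¹` maps the windows `Icc a (a + k)` of `ran α` injectively
to windows of `ran β`; by symmetry both ranges have the same number of windows of each length, and
taking second differences in `k`, the same number of runs (maximal intervals) of each length.
Conversely, pairing the runs of equal lengths, the map `T` translating each run of `ran α` onto its
partner is a partial automorphism from `ran α` onto `ran β`, and
`α = (α T β⁻¹) β T⁻¹`, `β = (β T⁻¹ α⁻¹) α T`. -/

open Set

section PartialMaps

noncomputable def ofFunctionalRel {α β : Type*} (R : α → β → Prop) : α →. β :=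
  fun x => ⟨∃ y, R x y, fun h => h.choose⟩

theorem mem_ofFunctionalRel {α β : Type*} {R : α → β → Prop}
    (hR : ∀ x y y', R x y → R x y' → y = y') {x : α} {y : β} :
    y ∈ ofFunctionalRel R x ↔ R x y := by
  refine ⟨?_, fun h => ⟨⟨y, h⟩, hR _ _ _ (Exists.choose_spec ⟨y, h⟩) h⟩⟩
  rintro ⟨h, rfl⟩
  exact h.choose_spec

def PInjective (f : ℕ →. ℕ) : Prop :=
  ∀ ⦃x y a : ℕ⦄, a ∈ f x → a ∈ f y → x = y

variable {n : ℕ} {f g : ℕ →. ℕ}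

theorem mem_pcomp {x z : ℕ} : z ∈ pcomp f g x ↔ ∃ y ∈ f x, z ∈ g y :=
  Part.mem_bind_iff

theorem mem_of_mem_pinv {x y : ℕ} (h : x ∈ pinv f y) : y ∈ f x := by
  obtain ⟨h, rfl⟩ := h
  exact h.choose_spec

theorem mem_pinv (hf : PInjective f) {x y : ℕ} : x ∈ pinv f y ↔ y ∈ f x :=
  mem_ofFunctionalRel (R := fun y x => y ∈ f x) fun _ _ _ h h' => hf h h'

theorem ran_pcomp_subset : (pcomp f g).ran ⊆ g.ran := by
  rintro z ⟨x, hz⟩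
  obtain ⟨y, -, hz⟩ := mem_pcomp.1 hz
  exact ⟨y, hz⟩

theorem ran_pinv_subset : (pinv f).ran ⊆ f.Dom := by
  rintro x ⟨y, hx⟩
  exact Part.dom_iff_mem.2 ⟨y, mem_of_mem_pinv hx⟩

theorem ran_pcomp_subset_dom_pinv : (pcomp f g).ran ⊆ (pinv g).Dom := by
  rintro z ⟨x, hz⟩
  obtain ⟨y, -, hz⟩ := mem_pcomp.1 hz
  exact show ∃ y, z ∈ g y from ⟨y, hz⟩

theorem image_pinv_ran_pcomp_subset (hg : PInjective g) :
    (pinv g).image (pcomp f g).ran ⊆ f.ran := by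
  rintro y ⟨z, ⟨x, hz⟩, hy⟩
  obtain ⟨y', hy', hzy'⟩ := mem_pcomp.1 hz
  rw [hg ((mem_pinv hg).1 hy) hzy']
  exact ⟨x, hy'⟩

theorem pcomp_pinv_cancel_right (hg : PInjective g) (h : f.ran ⊆ g.Dom) :
    pcomp (pcomp f g) (pinv g) = f := by
  ext x y
  simp only [mem_pcomp, mem_pinv hg]
  constructor
  · rintro ⟨z, ⟨y', hy', hz⟩, hz'⟩
    rwa [hg hz' hz]
  · intro hy
    obtain ⟨z, hz⟩ := Part.dom_iff_mem.1 (h ⟨x, hy⟩)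
    exact ⟨z, ⟨y, hy, hz⟩, hz⟩

theorem pinv_pcomp_cancel_right (h : f.ran ⊆ g.ran) :
    pcomp (pcomp f (pinv g)) g = f := by
  ext x y
  simp only [mem_pcomp]
  constructor
  · rintro ⟨z, ⟨y', hy', hz⟩, hyz⟩
    rwa [Part.mem_unique hyz (mem_of_mem_pinv hz)]
  · intro hy
    obtain ⟨z, hz⟩ := Part.dom_iff_mem.1 (show (pinv g y).Dom from h ⟨x, hy⟩)
    exact ⟨z, ⟨y, hy, hz⟩, mem_of_mem_pinv hz⟩

theorem IsPAut.pinv (hf : IsPAut n f) : IsPAut n (pinv f) := by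
  obtain ⟨⟨hdom, hran, hinj, hedge⟩, hcoedge⟩ := hf
  have hm : ∀ {x y}, x ∈ _root_.pinv f y ↔ y ∈ f x := mem_pinv hinj
  refine ⟨⟨fun y hy => hran ?_, fun x hx => hdom (ran_pinv_subset hx), ?_, ?_⟩, ?_⟩
  · obtain ⟨x, hx⟩ := Part.dom_iff_mem.1 hy
    exact ⟨x, hm.1 hx⟩
  · exact fun _ _ _ hx hy => Part.mem_unique (hm.1 hx) (hm.1 hy)
  · exact fun _ _ _ _ ha hb huv => hcoedge (hm.1 ha) (hm.1 hb) huv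
  · exact fun _ _ _ _ ha hb hab => hedge (hm.1 ha) (hm.1 hb) hab

theorem IsPAut.pcomp (hf : IsPAut n f) (hg : IsPAut n g) : IsPAut n (pcomp f g) := by
  obtain ⟨⟨hfdom, -, hfinj, hfedge⟩, hfcoedge⟩ := hf
  obtain ⟨⟨-, hgran, hginj, hgedge⟩, hgcoedge⟩ := hg
  refine ⟨⟨fun x hx => hfdom ?_, fun z hz => hgran (ran_pcomp_subset hz), ?_, ?_⟩, ?_⟩
  · obtain ⟨z, hz⟩ := Part.dom_iff_mem.1 hx
    obtain ⟨y, hy, -⟩ := mem_pcomp.1 hz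
    exact Part.dom_iff_mem.2 ⟨y, hy⟩
  · intro x x' z hx hx'
    obtain ⟨y, hy, hz⟩ := mem_pcomp.1 hx
    obtain ⟨y', hy', hz'⟩ := mem_pcomp.1 hx'
    exact hfinj hy (hginj hz hz' ▸ hy')
  · intro u v a b ha hb huv
    obtain ⟨y, hy, hay⟩ := mem_pcomp.1 ha
    obtain ⟨y', hy', hby'⟩ := mem_pcomp.1 hb
    exact hgedge hay hby' (hfedge hy hy' huv)
  · intro u v a b ha hb hab
    obtain ⟨y, hy, hay⟩ := mem_pcomp.1 ha
    obtain ⟨y', hy', hby'⟩ := mem_pcomp.1 hb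
    exact hfcoedge hy hy' (hgcoedge hay hby' hab)

end PartialMaps

section Runs

variable {X J : Set ℕ} {a k x : ℕ}

/-- `Icc a (a + k)` is a maximal block of consecutive elements of `X`. The left boundary is not
written `a - 1 ∉ X`, which truncated subtraction would make wrong for `a = 0`. -/
def IsRun (X : Set ℕ) (a k : ℕ) : Prop :=
  Icc a (a + k) ⊆ X ∧ (∀ c ∈ X, c + 1 ≠ a) ∧ a + k + 1 ∉ X

def runStarts (X : Set ℕ) (k : ℕ) : Set ℕ := {a | IsRun X a k}

def maxIntervals (X : Set ℕ) : Set (Set ℕ) := {J | IsMaxIntervalOf J X}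

theorem IsIntervalOf.mem_of_le (hJ : IsIntervalOf J X) {y z : ℕ} (hx : x ∈ J) (hz : z ∈ J)
    (hxy : x ≤ y) (hyz : y ≤ z) : y ∈ J := by
  rcases hxy.eq_or_lt with rfl | hxy
  · exact hx
  rcases hyz.eq_or_lt with rfl | hyz
  · exact hz
  exact hJ.2 hx hz hxy hyz

theorem isIntervalOf_Icc {b : ℕ} (h : Icc a b ⊆ X) : IsIntervalOf (Icc a b) X :=
  ⟨h, fun _ hx _ hy _ hxz hzy => ⟨hx.1.trans hxz.le, hzy.le.trans hy.2⟩⟩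

theorem IsRun.subset_Icc (h : IsRun X a k) (hJ : IsIntervalOf J X) (hxJ : x ∈ J)
    (hx : x ∈ Icc a (a + k)) : J ⊆ Icc a (a + k) := by
  obtain ⟨hax, hxk⟩ := hx
  intro z hz
  by_contra hzI
  rw [mem_Icc, not_and_or, not_le, not_le] at hzI
  rcases hzI with hza | hzk
  · exact h.2.1 (a - 1) (hJ.1 (hJ.mem_of_le hz hxJ (by omega) (by omega))) (by omega)
  · exact h.2.2 (hJ.1 (hJ.mem_of_le hxJ hz (by omega) (by omega)))

theorem IsRun.isMaxIntervalOf (h : IsRun X a k) : IsMaxIntervalOf (Icc a (a + k)) X :=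
  ⟨isIntervalOf_Icc h.1, fun _ hJ hsub =>
    hsub.antisymm (h.subset_Icc hJ (hsub ⟨le_rfl, by omega⟩) ⟨le_rfl, by omega⟩)⟩

theorem Icc_add_inj {a' k' : ℕ} (h : Icc a (a + k) = Icc a' (a' + k')) : a = a' ∧ k = k' := by
  obtain ⟨h1, h2⟩ := (Icc_eq_Icc_iff (by omega)).1 h
  omega

theorem IsRun.eq {a' k' : ℕ} (h : IsRun X a k) (h' : IsRun X a' k') (hx : x ∈ Icc a (a + k))
    (hx' : x ∈ Icc a' (a' + k')) : a = a' ∧ k = k' :=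
  Icc_add_inj <| (h'.subset_Icc (isIntervalOf_Icc h.1) hx hx').antisymm
    (h.subset_Icc (isIntervalOf_Icc h'.1) hx' hx)

theorem IsRun.add_one_mem (h : IsRun X a k) (hx : x ∈ Icc a (a + k)) (hx1 : x + 1 ∈ X) :
    x + 1 ∈ Icc a (a + k) := by
  obtain ⟨hax, hxk⟩ := hx
  refine ⟨by omega, not_lt.1 fun hlt => h.2.2 ?_⟩
  rwa [show a + k + 1 = x + 1 by omega]

theorem exists_isRun_of_mem (hX : X.Finite) (hx : x ∈ X) :
    ∃ a k, IsRun X a k ∧ x ∈ Icc a (a + k) := by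
  obtain ⟨N, hN⟩ := hX.bddAbove
  have hleft : ∃ a, Icc a x ⊆ X := ⟨x, by simpa using hx⟩
  set a := Nat.find hleft
  set b := Nat.findGreatest (fun b => Icc x b ⊆ X) N
  have hxN : x ≤ N := hN hx
  have hb : Icc x b ⊆ X :=
    Nat.findGreatest_spec (P := fun b => Icc x b ⊆ X) hxN (by simpa using hx)
  have hab : Icc a b ⊆ X := fun z hz => by
    rcases le_total z x with hzx | hxz
    · exact Nat.find_spec hleft ⟨hz.1, hzx⟩
    · exact hb ⟨hxz, hz.2⟩
  have hax : a ≤ x := Nat.find_min' hleft (by simpa using hx)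
  have hxb : x ≤ b := Nat.le_findGreatest hxN (by simpa using hx)
  refine ⟨a, b - a, ⟨by rwa [Nat.add_sub_cancel' (hax.trans hxb)], ?_, ?_⟩, hax, by omega⟩
  · intro c hc hca
    refine Nat.find_min hleft (show c < a by omega) fun z hz => ?_
    rcases hz.1.eq_or_lt with rfl | hcz
    · exact hc
    · exact Nat.find_spec hleft ⟨by omega, hz.2⟩
  · rw [Nat.add_sub_cancel' (hax.trans hxb)]
    intro hb1
    refine Nat.findGreatest_is_greatest (Nat.lt_succ_self b) (hN hb1) fun z hz => ?_
    rcases hz.2.eq_or_lt with rfl | hzb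
    · exact hb1
    · exact hb ⟨hz.1, by omega⟩

theorem IsMaxIntervalOf.exists_isRun (hX : X.Finite) (hJ : IsMaxIntervalOf J X)
    (hne : J.Nonempty) : ∃ a k, IsRun X a k ∧ J = Icc a (a + k) := by
  obtain ⟨x, hx⟩ := hne
  obtain ⟨a, k, h, hxI⟩ := exists_isRun_of_mem hX (hJ.1.1 hx)
  exact ⟨a, k, h, hJ.2 _ (isIntervalOf_Icc h.1) (h.subset_Icc hJ.1 hx hxI)⟩

theorem isMaxIntervalOf_empty_iff : IsMaxIntervalOf ∅ X ↔ X = ∅ := by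
  refine ⟨fun h => eq_empty_of_forall_notMem fun x hx => ?_, fun hX => ?_⟩
  · have := h.2 (Icc x x) (isIntervalOf_Icc (by simpa using hx)) (empty_subset _)
    exact (nonempty_Icc.2 le_rfl).ne_empty this.symm
  · subst hX
    exact ⟨⟨subset_rfl, fun _ h => h.elim⟩, fun _ hJ _ => (subset_empty_iff.1 hJ.1).symm⟩

theorem finite_runStarts (hX : X.Finite) (k : ℕ) : (runStarts X k).Finite :=
  hX.subset fun a h => h.1 ⟨le_rfl, by omega⟩

theorem finite_maxIntervals (hX : X.Finite) : (maxIntervals X).Finite :=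
  hX.finite_subsets.subset fun _ hJ => hJ.1.1

end Runs

section Matching

theorem bijOn_iff_mapsTo_and_existsUnique {α β : Type*} {σ : α → β} {A : Set α} {B : Set β} :
    BijOn σ A B ↔ MapsTo σ A B ∧ ∀ b ∈ B, ∃! a, a ∈ A ∧ σ a = b := by
  refine ⟨fun h => ⟨h.mapsTo, fun b hb => ?_⟩, fun ⟨hmaps, huniq⟩ => ⟨hmaps, ?_, ?_⟩⟩
  · obtain ⟨a, ha, rfl⟩ := h.surjOn hb
    exact ⟨a, ⟨ha, rfl⟩, fun a' ⟨ha', he⟩ => h.injOn ha' ha he⟩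
  · intro a ha a' ha' he
    exact (huniq _ (hmaps ha)).unique ⟨ha, rfl⟩ ⟨ha', he.symm⟩
  · intro b hb
    obtain ⟨a, ⟨ha, he⟩, -⟩ := huniq b hb
    exact ⟨a, ha, he⟩

theorem exists_bijOn_preserving_iff {α β : Type*} [Nonempty α] {A B : Set α} (w : α → β)
    (hA : A.Finite) (hB : B.Finite) :
    (∃ σ : α → α, BijOn σ A B ∧ ∀ a ∈ A, w (σ a) = w a) ↔
      ∀ m, {a ∈ A | w a = m}.ncard = {b ∈ B | w b = m}.ncard := by
  constructor
  · rintro ⟨σ, hσ, hw⟩ m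
    refine BijOn.ncard_eq ⟨fun a ha => ⟨hσ.mapsTo ha.1, (hw a ha.1).trans ha.2⟩,
      hσ.injOn.mono fun a ha => ha.1, fun b hb => ?_⟩
    obtain ⟨a, ha, rfl⟩ := hσ.surjOn hb.1
    exact ⟨a, ⟨ha, (hw a ha).symm.trans hb.2⟩, rfl⟩
  · intro h
    have hfibre : ∀ m, ∃ e : α → α, BijOn e {a ∈ A | w a = m} {b ∈ B | w b = m} := fun m => by
      have hA' := hA.subset (sep_subset A fun a => w a = m)
      have hB' := hB.subset (sep_subset B fun b => w b = m)
      exact hA'.exists_bijOn_of_encard_eq (by rw [← hA'.cast_ncard_eq, ← hB'.cast_ncard_eq, h m])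
    choose e he using hfibre
    have hmem : ∀ a ∈ A, e (w a) a ∈ B ∧ w (e (w a) a) = w a := fun a ha =>
      (he (w a)).mapsTo ⟨ha, rfl⟩
    refine ⟨fun a => e (w a) a, ⟨fun a ha => (hmem a ha).1, fun a ha a' ha' heq => ?_,
      fun b hb => ?_⟩, fun a ha => (hmem a ha).2⟩
    · simp only at heq
      have hw : w a = w a' := (hmem a ha).2.symm.trans (heq ▸ (hmem a' ha').2)
      rw [← hw] at heq
      exact (he (w a)).injOn ⟨ha, rfl⟩ ⟨ha', hw.symm⟩ heq
    · obtain ⟨a, ⟨ha, hwa⟩, hab⟩ := (he (w b)).surjOn ⟨hb, rfl⟩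
      exact ⟨a, ha, show e (w a) a = b by rw [hwa]; exact hab⟩

variable {X Y : Set ℕ}

theorem maxIntervals_ncard_succ (hX : X.Finite) (k : ℕ) :
    {J ∈ maxIntervals X | J.ncard = k + 1} = (fun a => Icc a (a + k)) '' runStarts X k := by
  ext J
  constructor
  · rintro ⟨hJ, hcard⟩
    obtain ⟨a, k', h, rfl⟩ := hJ.exists_isRun hX (nonempty_of_ncard_ne_zero (by omega))
    rw [ncard_Icc_nat] at hcard
    obtain rfl : k' = k := by omega
    exact ⟨a, h, rfl⟩
  · rintro ⟨a, h, rfl⟩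
    exact ⟨h.isMaxIntervalOf, by rw [ncard_Icc_nat]; omega⟩

theorem ncard_maxIntervals_ncard_succ (hX : X.Finite) (k : ℕ) :
    {J ∈ maxIntervals X | J.ncard = k + 1}.ncard = (runStarts X k).ncard := by
  rw [maxIntervals_ncard_succ hX, ncard_image_of_injective _ fun a b h => (Icc_add_inj h).1]

theorem maxIntervals_ncard_zero (hX : X.Finite) :
    {J ∈ maxIntervals X | J.ncard = 0} = {J | J = ∅ ∧ X = ∅} := by
  ext J
  refine ⟨fun ⟨hJ, hcard⟩ => ?_, fun ⟨hJ, hX'⟩ => ?_⟩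
  · obtain rfl := (ncard_eq_zero (hX.subset hJ.1.1)).1 hcard
    exact ⟨rfl, isMaxIntervalOf_empty_iff.1 hJ⟩
  · subst hJ
    exact ⟨isMaxIntervalOf_empty_iff.2 hX', ncard_empty _⟩

theorem eq_empty_iff_forall_ncard_runStarts_eq_zero (hX : X.Finite) :
    X = ∅ ↔ ∀ k, (runStarts X k).ncard = 0 := by
  refine ⟨?_, fun h => eq_empty_of_forall_notMem fun x hx => ?_⟩
  · rintro rfl k
    exact (ncard_eq_zero (finite_runStarts hX k)).2
      (eq_empty_of_forall_notMem fun a h => h.1 ⟨le_rfl, by omega⟩)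
  · obtain ⟨a, k, h', -⟩ := exists_isRun_of_mem hX hx
    exact ncard_ne_zero_of_mem (s := runStarts X k) h' (finite_runStarts hX k) (h k)

theorem forall_ncard_maxIntervals_eq_iff (hX : X.Finite) (hY : Y.Finite) :
    (∀ m, {J ∈ maxIntervals X | J.ncard = m}.ncard = {J ∈ maxIntervals Y | J.ncard = m}.ncard) ↔
      ∀ k, (runStarts X k).ncard = (runStarts Y k).ncard := by
  simp only [← ncard_maxIntervals_ncard_succ hX, ← ncard_maxIntervals_ncard_succ hY]
  refine ⟨fun h k => h (k + 1), fun h m => ?_⟩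
  cases m with
  | zero =>
    have hXY : X = ∅ ↔ Y = ∅ := by
      simp only [eq_empty_iff_forall_ncard_runStarts_eq_zero hX,
        eq_empty_iff_forall_ncard_runStarts_eq_zero hY, ← ncard_maxIntervals_ncard_succ hX,
        ← ncard_maxIntervals_ncard_succ hY, h]
    rw [maxIntervals_ncard_zero hX, maxIntervals_ncard_zero hY, hXY]
  | succ k => exact h k

theorem exists_maxInterval_matching_iff (hX : X.Finite) (hY : Y.Finite) :
    (∃ σ : Set ℕ → Set ℕ,
      (∀ J, IsMaxIntervalOf J X → IsMaxIntervalOf (σ J) Y) ∧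
      (∀ J', IsMaxIntervalOf J' Y → ∃! J, IsMaxIntervalOf J X ∧ σ J = J') ∧
      (∀ J, IsMaxIntervalOf J X → J.ncard = (σ J).ncard)) ↔
    ∀ k, (runStarts X k).ncard = (runStarts Y k).ncard := by
  rw [← forall_ncard_maxIntervals_eq_iff hX hY, ← exists_bijOn_preserving_iff ncard
    (finite_maxIntervals hX) (finite_maxIntervals hY)]
  refine exists_congr fun σ => ?_
  rw [bijOn_iff_mapsTo_and_existsUnique]
  exact ⟨fun ⟨h1, h2, h3⟩ => ⟨⟨fun J hJ => h1 J hJ, h2⟩, fun J hJ => (h3 J hJ).symm⟩,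
    fun ⟨⟨h1, h2⟩, h3⟩ => ⟨fun J hJ => h1 hJ, h2, fun J hJ => (h3 J hJ).symm⟩⟩

end Matching

section Windows

variable {n : ℕ} {f : ℕ →. ℕ} {X Y : Set ℕ}

theorem IsIEnd.translate_or_reflect (hf : IsIEnd n f) {a : ℕ} :
    ∀ k, Icc a (a + k) ⊆ f.Dom →
      ∃ v, (∀ i ≤ k, v + i ∈ f (a + i)) ∨ (∀ i ≤ k, v + (k - i) ∈ f (a + i))
  | 0, hdom => by
    obtain ⟨v, hv⟩ := Part.dom_iff_mem.1 (hdom ⟨le_rfl, le_add_right le_rfl⟩)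
    refine ⟨v, Or.inl fun i hi => ?_⟩
    obtain rfl : i = 0 := by omega
    simpa using hv
  | k + 1, hdom => by
    obtain ⟨v, hv⟩ := hf.translate_or_reflect k ((Icc_subset_Icc_right (by omega)).trans hdom)
    obtain ⟨w, hw⟩ := Part.dom_iff_mem.1 (hdom ⟨by omega, le_rfl⟩)
    -- `w` is adjacent to the image of `a + k` and, by injectivity, differs from the image of
    -- `a + k - 1`, its other neighbour; so the direction cannot change unless `k = 0`.
    have hnew : ∀ i ≤ k, ∀ y ∈ f (a + i), y ≠ w := fun i hi y hy hyw => by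
      have := hf.inj hy (hyw ▸ hw)
      omega
    have htranslate : ∀ v, (∀ i ≤ k, v + i ∈ f (a + i)) → v + (k + 1) = w →
        ∀ i ≤ k + 1, v + i ∈ f (a + i) := fun v hL hvw i hi => by
      rcases hi.lt_or_eq with hi | rfl
      · exact hL i (by omega)
      · rwa [hvw]
    have hreflect : ∀ v, (∀ i ≤ k, v + (k - i) ∈ f (a + i)) → w + 1 = v →
        ∀ i ≤ k + 1, w + (k + 1 - i) ∈ f (a + i) := fun v hR hwv i hi => by
      rcases hi.lt_or_eq with hi | rfl
      · rw [show w + (k + 1 - i) = v + (k - i) by omega]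
        exact hR i (by omega)
      · simpa using hw
    rcases hv with hL | hR
    · rcases hf.edge (hL k le_rfl) hw (Or.inl (by omega)) with hvw | hwv
      · exact ⟨v, Or.inl (htranslate v hL hvw)⟩
      · rcases Nat.eq_zero_or_pos k with rfl | hk
        · exact ⟨w, Or.inr (hreflect v (by simpa using hL) (by simpa using hwv))⟩
        · exact absurd (by omega) (hnew (k - 1) (by omega) _ (hL (k - 1) (by omega)))
    · rcases hf.edge (hR k le_rfl) hw (Or.inl (by omega)) with hvw | hwv
      · rcases Nat.eq_zero_or_pos k with rfl | hk
        · exact ⟨v, Or.inl (htranslate v (by simpa using hR) (by simpa using hvw))⟩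
        · exact absurd (by omega) (hnew (k - 1) (by omega) _ (hR (k - 1) (by omega)))
      · exact ⟨w, Or.inr (hreflect v hR (by simpa using hwv))⟩

theorem IsIEnd.exists_image_Icc (hf : IsIEnd n f) {a k : ℕ} (hdom : Icc a (a + k) ⊆ f.Dom) :
    ∃ v, f.image (Icc a (a + k)) = Icc v (v + k) := by
  obtain ⟨v, hv⟩ := hf.translate_or_reflect k hdom
  suffices ∀ φ : ℕ → ℕ, (∀ i ≤ k, φ i ∈ f (a + i)) → (∀ i ≤ k, φ i ∈ Icc v (v + k)) →
      (∀ y ∈ Icc v (v + k), ∃ i ≤ k, φ i = y) → f.image (Icc a (a + k)) = Icc v (v + k) by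
    refine ⟨v, hv.elim (fun hL => this _ hL ?_ ?_) (fun hR => this _ hR ?_ ?_)⟩
    · exact fun i hi => ⟨by omega, by omega⟩
    · exact fun y ⟨hvy, hyk⟩ => ⟨y - v, by omega, by omega⟩
    · exact fun i hi => ⟨by omega, by omega⟩
    · exact fun y ⟨hvy, hyk⟩ => ⟨v + k - y, by omega, by omega⟩
  intro φ hφ hmaps hsurj
  ext y
  rw [PFun.mem_image]
  constructor
  · rintro ⟨x, ⟨hax, hxk⟩, hy⟩
    have hx := hφ (x - a) (by omega)
    rw [Nat.add_sub_cancel' hax] at hx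
    rw [Part.mem_unique hy hx]
    exact hmaps _ (by omega)
  · intro hy
    obtain ⟨i, hi, rfl⟩ := hsurj y hy
    exact ⟨a + i, ⟨by omega, by omega⟩, hφ i hi⟩

theorem PInjective.subset_of_image_subset (hf : PInjective f) {s t : Set ℕ} (hs : s ⊆ f.Dom)
    (h : f.image s ⊆ f.image t) : s ⊆ t := by
  intro x hx
  obtain ⟨y, hy⟩ := Part.dom_iff_mem.1 (hs hx)
  obtain ⟨x', hx', hy'⟩ := (PFun.mem_image _ _ _).1 (h ⟨x, hx, hy⟩)
  rwa [hf hy hy']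

def windowStarts (X : Set ℕ) (k : ℕ) : Set ℕ := {a | Icc a (a + k) ⊆ X}

def endWindowStarts (X : Set ℕ) (k : ℕ) : Set ℕ := {a | Icc a (a + k) ⊆ X ∧ a + k + 1 ∉ X}

theorem finite_windowStarts (hX : X.Finite) (k : ℕ) : (windowStarts X k).Finite :=
  hX.subset fun a h => h ⟨le_rfl, by omega⟩

/-- By rigidity, `f` maps each window of `X` onto a window of `Y`, and injectivity of `f` makes
this injective on windows. -/
theorem ncard_windowStarts_le (hf : IsIEnd n f) (hY : Y.Finite) (hdom : X ⊆ f.Dom)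
    (himage : f.image X ⊆ Y) (k : ℕ) : (windowStarts X k).ncard ≤ (windowStarts Y k).ncard := by
  have h : ∀ a ∈ windowStarts X k, ∃ v, f.image (Icc a (a + k)) = Icc v (v + k) :=
    fun a ha => hf.exists_image_Icc (Subset.trans ha hdom)
  choose! F hF using h
  refine ncard_le_ncard_of_injOn F (fun a ha => ?_) (fun a ha b hb hab => ?_)
    (finite_windowStarts hY k)
  · show Icc (F a) (F a + k) ⊆ Y
    rw [← hF a ha]
    exact (f.image_mono ha).trans himage
  · have hinj : PInjective f := hf.inj
    have hab' : f.image (Icc a (a + k)) = f.image (Icc b (b + k)) := by rw [hF a ha, hF b hb, hab]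
    exact (Icc_add_inj ((hinj.subset_of_image_subset (Subset.trans ha hdom) hab'.le).antisymm
      (hinj.subset_of_image_subset (Subset.trans hb hdom) hab'.ge))).1

theorem ncard_windowStarts_eq (hX : X.Finite) (k : ℕ) :
    (windowStarts X k).ncard = (windowStarts X (k + 1)).ncard + (endWindowStarts X k).ncard := by
  have hsplit : windowStarts X k = windowStarts X (k + 1) ∪ endWindowStarts X k := by
    ext a
    refine ⟨fun ha => ?_, ?_⟩
    · by_cases hend : a + k + 1 ∈ X
      · refine Or.inl fun z ⟨haz, hz⟩ => ?_
        rcases (show z ≤ a + k ∨ z = a + k + 1 by omega) with hz | rfl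
        · exact ha ⟨haz, hz⟩
        · exact hend
      · exact Or.inr ⟨ha, hend⟩
    · rintro (ha | ha)
      · exact (Icc_subset_Icc_right (by omega)).trans ha
      · exact ha.1
  rw [hsplit]
  refine ncard_union_eq (disjoint_left.2 fun a ha hend => hend.2 (ha ⟨by omega, by omega⟩))
    (finite_windowStarts hX _) ((finite_windowStarts hX k).subset fun a ha => ha.1)

theorem ncard_endWindowStarts_eq (hX : X.Finite) (k : ℕ) :
    (endWindowStarts X k).ncard = (endWindowStarts X (k + 1)).ncard + (runStarts X k).ncard := by
  have hsplit : endWindowStarts X k = (· + 1) '' endWindowStarts X (k + 1) ∪ runStarts X k := by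
    ext a
    refine ⟨fun ha => ?_, ?_⟩
    · by_cases hstart : ∃ c ∈ X, c + 1 = a
      · obtain ⟨c, hc, rfl⟩ := hstart
        have hend : c + (k + 1) + 1 ∉ X := by
          rw [show c + (k + 1) + 1 = c + 1 + k + 1 by omega]
          exact ha.2
        refine Or.inl ⟨c, ⟨fun z ⟨hcz, hz⟩ => ?_, hend⟩, rfl⟩
        rcases hcz.eq_or_lt with rfl | hcz
        · exact hc
        · exact ha.1 ⟨by omega, by omega⟩
      · push Not at hstart
        exact Or.inr ⟨ha.1, hstart, ha.2⟩
    · rintro (⟨c, ⟨hc, hend⟩, rfl⟩ | ha)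
      · dsimp only
        exact ⟨(Icc_subset_Icc (by omega) (by omega)).trans hc, by
          rwa [show c + 1 + k + 1 = c + (k + 1) + 1 by omega]⟩
      · exact ⟨ha.1, ha.2.2⟩
  have hfin : (endWindowStarts X (k + 1)).Finite :=
    (finite_windowStarts hX _).subset fun a ha => ha.1
  have hdisj : Disjoint ((· + 1) '' endWindowStarts X (k + 1)) (runStarts X k) :=
    disjoint_left.2 fun _ ⟨c, hc, hca⟩ hrun => hrun.2.1 c (hc.1 ⟨le_rfl, by omega⟩) hca
  rw [hsplit, ncard_union_eq hdisj (hfin.image _) (finite_runStarts hX k),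
    ncard_image_of_injective _ (add_left_injective 1)]

theorem ncard_runStarts_eq_of_ncard_windowStarts_eq (hX : X.Finite) (hY : Y.Finite)
    (h : ∀ k, (windowStarts X k).ncard = (windowStarts Y k).ncard) (k : ℕ) :
    (runStarts X k).ncard = (runStarts Y k).ncard := by
  have hend : ∀ k, (endWindowStarts X k).ncard = (endWindowStarts Y k).ncard := fun k => by
    have := ncard_windowStarts_eq hX k
    have := ncard_windowStarts_eq hY k
    have := h k
    have := h (k + 1)
    omega
  have := ncard_endWindowStarts_eq hX k
  have := ncard_endWindowStarts_eq hY k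
  have := hend k
  have := hend (k + 1)
  omega

end Windows

section Translation

variable {n : ℕ} {X Y : Set ℕ} {e : ℕ → ℕ → ℕ}

noncomputable def runTranslation (X : Set ℕ) (e : ℕ → ℕ → ℕ) : ℕ →. ℕ :=
  ofFunctionalRel fun x y => ∃ a k, IsRun X a k ∧ x ∈ Icc a (a + k) ∧ y + a = x + e k a

theorem mem_runTranslation {x y : ℕ} :
    y ∈ runTranslation X e x ↔ ∃ a k, IsRun X a k ∧ x ∈ Icc a (a + k) ∧ y + a = x + e k a := by
  refine mem_ofFunctionalRel ?_
  rintro x y y' ⟨a, k, h, hx, hy⟩ ⟨a', k', h', hx', hy'⟩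
  obtain ⟨rfl, rfl⟩ := h.eq h' hx hx'
  omega

theorem dom_runTranslation (hX : X.Finite) : (runTranslation X e).Dom = X := by
  ext x
  refine ⟨fun hx => ?_, fun hx => ?_⟩
  · obtain ⟨y, hy⟩ := Part.dom_iff_mem.1 hx
    obtain ⟨a, k, h, hxI, -⟩ := mem_runTranslation.1 hy
    exact h.1 hxI
  · obtain ⟨a, k, h, hax, hxk⟩ := exists_isRun_of_mem hX hx
    exact Part.dom_iff_mem.2
      ⟨x - a + e k a, mem_runTranslation.2 ⟨a, k, h, ⟨hax, hxk⟩, by omega⟩⟩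

theorem mem_runTranslation_target (he : ∀ k, BijOn (e k) (runStarts X k) (runStarts Y k)) {x y : ℕ} (hy : y ∈ runTranslation X e x) :
    ∃ a k, IsRun Y (e k a) k ∧ y ∈ Icc (e k a) (e k a + k) ∧
      IsRun X a k ∧ x ∈ Icc a (a + k) ∧ y + a = x + e k a := by
  obtain ⟨a, k, h, ⟨hax, hxk⟩, hxy⟩ := mem_runTranslation.1 hy
  exact ⟨a, k, (he k).mapsTo h, ⟨by omega, by omega⟩, h, ⟨hax, hxk⟩, hxy⟩

theorem eq_of_isRun_target (he : ∀ k, BijOn (e k) (runStarts X k) (runStarts Y k))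
    {a a' k k' y : ℕ} (h : IsRun Y (e k a) k) (h' : IsRun Y (e k' a') k')
    (hy : y ∈ Icc (e k a) (e k a + k)) (hy' : y ∈ Icc (e k' a') (e k' a' + k'))
    (ha : IsRun X a k) (ha' : IsRun X a' k') : a = a' ∧ k = k' := by
  obtain ⟨hea, rfl⟩ := h.eq h' hy hy'
  exact ⟨(he k).injOn ha ha' hea, rfl⟩

theorem ran_runTranslation (he : ∀ k, BijOn (e k) (runStarts X k) (runStarts Y k))
    (hY : Y.Finite) : (runTranslation X e).ran = Y := by
  ext y
  refine ⟨fun ⟨x, hy⟩ => ?_, fun hy => ?_⟩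
  · obtain ⟨a, k, h, hyI, -⟩ := mem_runTranslation_target he hy
    exact h.1 hyI
  · obtain ⟨a', k, h', hay, hyk⟩ := exists_isRun_of_mem hY hy
    obtain ⟨a, ha, rfl⟩ := (he k).surjOn h'
    exact ⟨a + (y - e k a), mem_runTranslation.2 ⟨a, k, ha, ⟨by omega, by omega⟩, by omega⟩⟩

theorem isPAut_runTranslation (he : ∀ k, BijOn (e k) (runStarts X k) (runStarts Y k))
    (hXn : X ⊆ Icc 1 n) (hYn : Y ⊆ Icc 1 n) :
    IsPAut n (runTranslation X e) := by
  have hX : X.Finite := (finite_Icc 1 n).subset hXn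
  have hY : Y.Finite := (finite_Icc 1 n).subset hYn
  have hsucc : ∀ {x y y'}, y ∈ runTranslation X e x → y' ∈ runTranslation X e (x + 1) →
      y + 1 = y' := fun {x y y'} hy hy' => by
    obtain ⟨a, k, h, hx, hxy⟩ := mem_runTranslation.1 hy
    obtain ⟨a', k', h', hx', hxy'⟩ := mem_runTranslation.1 hy'
    obtain ⟨rfl, rfl⟩ := h.eq h' (h.add_one_mem hx (h'.1 hx')) hx'
    omega
  have hsucc_inv : ∀ {x x' y}, y ∈ runTranslation X e x → y + 1 ∈ runTranslation X e x' →
      x + 1 = x' := fun {x x' y} hy hy' => by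
    obtain ⟨a, k, h, hyI, ha, -, hxy⟩ := mem_runTranslation_target he hy
    obtain ⟨a', k', h', hyI', ha', -, hxy'⟩ := mem_runTranslation_target he hy'
    obtain ⟨rfl, rfl⟩ :=
      eq_of_isRun_target he h h' (h.add_one_mem hyI (h'.1 hyI')) hyI' ha ha'
    omega
  refine ⟨⟨?_, ?_, fun x x' y hy hy' => ?_, ?_⟩, ?_⟩
  · exact (dom_runTranslation hX).trans_subset hXn
  · exact (ran_runTranslation he hY).trans_subset hYn
  · obtain ⟨a, k, h, hyI, ha, -, hxy⟩ := mem_runTranslation_target he hy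
    obtain ⟨a', k', h', hyI', ha', -, hxy'⟩ := mem_runTranslation_target he hy'
    obtain ⟨rfl, rfl⟩ := eq_of_isRun_target he h h' hyI hyI' ha ha'
    omega
  · rintro u v y y' hy hy' (rfl | rfl)
    · exact Or.inl (hsucc hy hy')
    · exact Or.inr (hsucc hy' hy)
  · rintro u v y y' hy hy' (rfl | rfl)
    · exact Or.inl (hsucc_inv hy hy')
    · exact Or.inr (hsucc_inv hy' hy)

end Translation

section JRelation

variable {n : ℕ} {α β : ℕ →. ℕ}

def JRelated (n : ℕ) (α β : ℕ →. ℕ) : Prop :=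
  ∃ γ γ' δ δ' : ℕ →. ℕ, IsPAut n γ ∧ IsPAut n γ' ∧ IsPAut n δ ∧ IsPAut n δ' ∧
    α = pcomp (pcomp γ β) γ' ∧ β = pcomp (pcomp δ α) δ'

theorem ncard_windowStarts_le_of_eq_pcomp {γ γ' : ℕ →. ℕ} (hγ' : IsPAut n γ')
    (hY : β.ran.Finite) (h : α = pcomp (pcomp γ β) γ') (k : ℕ) :
    (windowStarts α.ran k).ncard ≤ (windowStarts β.ran k).ncard := by
  subst h
  exact ncard_windowStarts_le hγ'.pinv.1 hY ran_pcomp_subset_dom_pinv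
    ((image_pinv_ran_pcomp_subset hγ'.1.inj).trans ran_pcomp_subset) k

theorem JRelated.ncard_runStarts_eq (h : JRelated n α β) (hX : α.ran.Finite)
    (hY : β.ran.Finite) (k : ℕ) : (runStarts α.ran k).ncard = (runStarts β.ran k).ncard := by
  obtain ⟨γ, γ', δ, δ', -, hγ', -, hδ', hαβ, hβα⟩ := h
  exact ncard_runStarts_eq_of_ncard_windowStarts_eq hX hY (fun k => le_antisymm
    (ncard_windowStarts_le_of_eq_pcomp hγ' hY hαβ k)
    (ncard_windowStarts_le_of_eq_pcomp hδ' hX hβα k)) k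

theorem jRelated_of_dom_eq_of_ran_eq {T : ℕ →. ℕ} (hα : IsPAut n α) (hβ : IsPAut n β)
    (hT : IsPAut n T) (hdom : T.Dom = α.ran) (hran : T.ran = β.ran) : JRelated n α β := by
  refine ⟨pcomp (pcomp α T) (pinv β), pinv T, pcomp (pcomp β (pinv T)) (pinv α), T,
    (hα.pcomp hT).pcomp hβ.pinv, hT.pinv, (hβ.pcomp hT.pinv).pcomp hα.pinv, hT, ?_, ?_⟩
  · rw [pinv_pcomp_cancel_right (ran_pcomp_subset.trans hran.le),
      pcomp_pinv_cancel_right hT.1.inj hdom.ge]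
  · rw [pinv_pcomp_cancel_right (ran_pcomp_subset.trans (ran_pinv_subset.trans hdom.le)),
      pinv_pcomp_cancel_right hran.ge]

theorem jRelated_of_ncard_runStarts_eq (hα : IsPAut n α) (hβ : IsPAut n β)
    (h : ∀ k, (runStarts α.ran k).ncard = (runStarts β.ran k).ncard) : JRelated n α β := by
  have hX : α.ran.Finite := (finite_Icc 1 n).subset hα.1.ran_subset
  have hY : β.ran.Finite := (finite_Icc 1 n).subset hβ.1.ran_subset
  have hbij : ∀ k, ∃ e : ℕ → ℕ, BijOn e (runStarts α.ran k) (runStarts β.ran k) := fun k =>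
    (finite_runStarts hX k).exists_bijOn_of_encard_eq (by
      rw [← (finite_runStarts hX k).cast_ncard_eq, ← (finite_runStarts hY k).cast_ncard_eq, h k])
  choose e he using hbij
  exact jRelated_of_dom_eq_of_ran_eq hα hβ
    (isPAut_runTranslation he hα.1.ran_subset hβ.1.ran_subset)
    (dom_runTranslation hX) (ran_runTranslation he hY)

end JRelation

theorem stmt11 (n : ℕ) (α β : ℕ →. ℕ) (hα : IsPAut n α) (hβ : IsPAut n β) :
    (∃ γ γ' δ δ' : ℕ →. ℕ, IsPAut n γ ∧ IsPAut n γ' ∧ IsPAut n δ ∧ IsPAut n δ' ∧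
      α = pcomp (pcomp γ β) γ' ∧ β = pcomp (pcomp δ α) δ') ↔
    (∃ σ : Set ℕ → Set ℕ,
      (∀ J, IsMaxIntervalOf J α.ran → IsMaxIntervalOf (σ J) β.ran) ∧
      (∀ J', IsMaxIntervalOf J' β.ran → ∃! J, IsMaxIntervalOf J α.ran ∧ σ J = J') ∧
      (∀ J, IsMaxIntervalOf J α.ran → J.ncard = (σ J).ncard)) := by
  have hX : α.ran.Finite := (finite_Icc 1 n).subset hα.1.ran_subset
  have hY : β.ran.Finite := (finite_Icc 1 n).subset hβ.1.ran_subset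
  change JRelated n α β ↔ _
  rw [exists_maxInterval_matching_iff hX hY]
  exact ⟨fun h => h.ncard_runStarts_eq hX hY, jRelated_of_ncard_runStarts_eq hα hβ⟩
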